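/- arXiv:2507.01854 — 5 statements merged into one kernel-verified Lean document; each statement's English description precedes it below -/
import Mathlib

section
/- Let S ⊆ ℝ^D be compact, f : S → ℝ be C¹ with finitely many critical points, all isolated and in the interior of S, and let f_n : S → ℝ be differentiable with f_n → f and ∇f_n → ∇f uniformly. If the critical point resolution R({f_n}) := liminf_{n→∞} inf{|p₁ − p₂| : p₁ ≠ p₂ critical points of f_n} is strictly positive, then limsup_{n→∞} N_C(f_n) ≤ N_C(f), where N_C(g) is the number of critical points of g. -/
/-!
Since `∇g` is continuous and nonzero on the compact set of points of `S` at distance at least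
`ε / 2` from every critical point of `g`, it is bounded away from zero there, so by uniform
convergence `∇fₙ` eventually has no zeros there either: every critical point of `fₙ` lies within
`ε / 2` of a critical point of `g`. Two distinct critical points of `fₙ` are eventually `ε` apart,
so no two of them are within `ε / 2` of the same critical point of `g`, whence
`N_C(fₙ) ≤ N_C(g)`.
-/

open Filter Metric

theorem TendstoUniformlyOn.eventually_forall_ne_zero {X E ι : Type*} [TopologicalSpace X]
    [NormedAddCommGroup E] {l : Filter ι} {F : ι → X → E} {G : X → E} {K : Set X}
    (hFG : TendstoUniformlyOn F G l K) (hK : IsCompact K) (hG : ContinuousOn G K)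
    (hG0 : ∀ x ∈ K, G x ≠ 0) : ∀ᶠ i in l, ∀ x ∈ K, F i x ≠ 0 := by
  obtain ⟨δ, hδ, hGδ⟩ := hK.exists_forall_le' hG.norm (a := 0) fun x hx ↦ norm_pos_iff.2 (hG0 x hx)
  filter_upwards [tendstoUniformlyOn_iff.1 hFG δ hδ] with i hi x hx hFx
  have hclose := hi x hx
  rw [hFx, dist_zero_right] at hclose
  exact (hGδ x hx).not_gt hclose

theorem TendstoUniformlyOn.eventually_zeros_subset_thickening {X E ι : Type*} [MetricSpace X]
    [NormedAddCommGroup E] {l : Filter ι} {F : ι → X → E} {G : X → E} {K : Set X}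
    (hFG : TendstoUniformlyOn F G l K) (hK : IsCompact K) (hG : ContinuousOn G K) {δ : ℝ} (hδ : 0 < δ) :
    ∀ᶠ i in l, {x ∈ K | F i x = 0} ⊆ thickening δ {x ∈ K | G x = 0} := by
  set K' := K \ thickening δ {x ∈ K | G x = 0}
  have hG0 : ∀ x ∈ K', G x ≠ 0 := fun x hx hGx ↦ hx.2 (self_subset_thickening hδ _ ⟨hx.1, hGx⟩)
  filter_upwards [(hFG.mono Set.sdiff_subset).eventually_forall_ne_zero
    (hK.diff isOpen_thickening) (hG.mono Set.sdiff_subset) hG0] with i hi x ⟨hxK, hFx⟩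
  by_contra hx
  exact hi x ⟨hxK, hx⟩ hFx

theorem Set.encard_le_of_subset_thickening_of_separated {X : Type*} [PseudoMetricSpace X]
    {A T : Set X} {ε : ℝ} (hAT : A ⊆ thickening (ε / 2) T)
    (hA : ∀ x ∈ A, ∀ y ∈ A, x ≠ y → ε ≤ dist x y) : A.encard ≤ T.encard := by
  have hnear : ∀ x, ∃ z, x ∈ A → z ∈ T ∧ dist x z < ε / 2 := fun x ↦ by
    by_cases hx : x ∈ A
    · obtain ⟨z, hzT, hxz⟩ := mem_thickening_iff.1 (hAT hx)
      exact ⟨z, fun _ ↦ ⟨hzT, hxz⟩⟩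
    · exact ⟨x, fun h ↦ (hx h).elim⟩
  choose φ hφ using hnear
  refine Set.encard_le_encard_of_injOn (fun x hx ↦ (hφ x hx).1) fun x hx y hy hxy ↦ ?_
  by_contra hne
  have hsep := hA x hx y hy hne
  have : dist x y < ε := calc
    dist x y ≤ dist x (φ x) + dist y (φ y) := by rw [hxy]; exact dist_triangle_right _ _ _
    _ < ε / 2 + ε / 2 := add_lt_add (hφ x hx).2 (hφ y hy).2
    _ = ε := add_halves ε
  exact this.not_ge hsep

theorem stmt3_general {D : ℕ} (S : Set (EuclideanSpace ℝ (Fin D))) (hS : IsCompact S)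
    (f : ℕ → EuclideanSpace ℝ (Fin D) → ℝ) (g : EuclideanSpace ℝ (Fin D) → ℝ)
    (hg : ContDiff ℝ 1 g)
    (hconv' : TendstoUniformlyOn (fun n s => fderiv ℝ (f n) s) (fderiv ℝ g) atTop S)
    (hres : ∃ ε > 0, ∀ᶠ n in atTop,
      ∀ p₁ ∈ S, ∀ p₂ ∈ S, fderiv ℝ (f n) p₁ = 0 → fderiv ℝ (f n) p₂ = 0 →
        p₁ ≠ p₂ → ε ≤ dist p₁ p₂) :
    Filter.atTop.limsup (fun n => {s ∈ S | fderiv ℝ (f n) s = 0}.encard) ≤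
      {s ∈ S | fderiv ℝ g s = 0}.encard := by
  obtain ⟨ε, hε, hres⟩ := hres
  refine limsup_le_of_le (by isBoundedDefault) ?_
  filter_upwards [hconv'.eventually_zeros_subset_thickening hS
    (hg.continuous_fderiv one_ne_zero).continuousOn (half_pos hε), hres] with n hnear hsep
  exact Set.encard_le_of_subset_thickening_of_separated hnear
    fun x hx y hy ↦ hsep x hx.1 y hy.1 hx.2 hy.2

/-- critical point upper bound. If `fₙ → f` in the `C¹` sense on a compact set,
`f` has finitely many critical points, all interior and isolated, and the critical point
resolution of `{fₙ}` is bounded below, then `limsup N_C(fₙ) ≤ N_C(f)`. -/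
theorem stmt3 {D : ℕ} (S : Set (EuclideanSpace ℝ (Fin D))) (hS : IsCompact S)
    (f : ℕ → EuclideanSpace ℝ (Fin D) → ℝ) (g : EuclideanSpace ℝ (Fin D) → ℝ)
    (hg : ContDiff ℝ 1 g) (hf : ∀ n, Differentiable ℝ (f n))
    (hconv : TendstoUniformlyOn f g atTop S)
    (hconv' : TendstoUniformlyOn (fun n s => fderiv ℝ (f n) s) (fderiv ℝ g) atTop S)
    (hfin : {s ∈ S | fderiv ℝ g s = 0}.Finite)
    (hint : ∀ s ∈ S, fderiv ℝ g s = 0 → s ∈ interior S)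
    (hiso : ∀ p ∈ S, fderiv ℝ g p = 0 →
      ∃ ε > 0, ∀ q ∈ S, fderiv ℝ g q = 0 → q ∈ ball p ε → q = p)
    (hres : ∃ ε > 0, ∀ᶠ n in atTop,
      ∀ p₁ ∈ S, ∀ p₂ ∈ S, fderiv ℝ (f n) p₁ = 0 → fderiv ℝ (f n) p₂ = 0 →
        p₁ ≠ p₂ → ε ≤ dist p₁ p₂) :
    Filter.atTop.limsup (fun n => {s ∈ S | fderiv ℝ (f n) s = 0}.encard) ≤
      {s ∈ S | fderiv ℝ g s = 0}.encard :=
  stmt3_general S hS f g hg hconv' hres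
end

section
/- There exists a sequence of C^∞ functions f_n : ℝ → ℝ, each having exactly one critical point (a local maximum), converging uniformly (C⁰) on compact sets to a C^∞ function f with no critical points at all. -/
open Filter Topology

private lemma derivf (n : ℕ) (p : ℝ) :
    deriv (fun x : ℝ => x - Real.exp (x - n)) p = 1 - Real.exp (p - n) := by
  have h1 : HasDerivAt (fun x : ℝ => x - (n : ℝ)) 1 p := (hasDerivAt_id p).sub_const _
  have h2 : HasDerivAt (fun x : ℝ => Real.exp (x - n)) (Real.exp (p - n) * 1) p :=
    by have := (Real.hasDerivAt_exp (p - n)).comp p h1; exact this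
  have h3 : HasDerivAt (fun x : ℝ => x - Real.exp (x - n))
      (1 - Real.exp (p - n) * 1) p := (hasDerivAt_id p).sub h2
  rw [h3.deriv]; ring

/-- there is a sequence of `C^∞` functions on `ℝ`, each with exactly one
critical point, which is a local maximum, converging uniformly on compact sets to a `C^∞`
function with no critical points. -/
theorem stmt4 : ∃ (f : ℕ → ℝ → ℝ) (g : ℝ → ℝ),
    (∀ n, ContDiff ℝ (⊤ : ℕ∞) (f n)) ∧ ContDiff ℝ (⊤ : ℕ∞) g ∧
    (∀ n, ∃! p : ℝ, deriv (f n) p = 0) ∧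
    (∀ n p, deriv (f n) p = 0 → IsLocalMax (f n) p) ∧
    TendstoLocallyUniformly f g atTop ∧
    (∀ p : ℝ, deriv g p ≠ 0) := by
  refine ⟨fun n x => x - Real.exp (x - n), fun x => x, ?_, contDiff_id, ?_, ?_, ?_, ?_⟩
  · intro n
    exact contDiff_id.sub (Real.contDiff_exp.comp (contDiff_id.sub contDiff_const))
  · intro n
    refine ⟨n, ?_, ?_⟩
    · simp [derivf]
    · intro p hp
      rw [derivf] at hp
      have h1 : Real.exp (p - n) = 1 := by linarith
      have : p - (n:ℝ) = 0 := by simpa using h1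
      linarith
  · intro n p hp
    rw [derivf] at hp
    have hpn : p = n := by
      have h1 : Real.exp (p - n) = 1 := by linarith
      have : p - (n:ℝ) = 0 := by simpa using h1
      linarith
    subst hpn
    refine Filter.Eventually.of_forall fun x => ?_
    have h2 := Real.add_one_le_exp (x - (n:ℝ))
    have h3 : ((n:ℝ) - n) = 0 := by ring
    simp only [h3, Real.exp_zero]
    linarith
  · rw [Metric.tendstoLocallyUniformly_iff]
    intro ε hε x
    refine ⟨Metric.ball x 1, Metric.ball_mem_nhds x one_pos, ?_⟩
    have hlim : Tendsto (fun n : ℕ => Real.exp (x + 1 - n)) atTop (𝓝 0) := by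
      have h1 : Tendsto (fun n : ℕ => x + 1 - (n : ℝ)) atTop atBot :=
        tendsto_atBot_add_const_left _ _ (tendsto_neg_atBot_iff.mpr tendsto_natCast_atTop_atTop)
      exact Real.tendsto_exp_atBot.comp h1
    filter_upwards [hlim.eventually (gt_mem_nhds hε)] with n hn y hy
    have hy1 : y < x + 1 := by
      have := abs_lt.mp (by simpa [Real.dist_eq] using hy)
      linarith [this.1, this.2]
    have : Real.exp (y - n) ≤ Real.exp (x + 1 - n) :=
      Real.exp_le_exp.mpr (by linarith)
    have hpos := Real.exp_pos (y - n)
    rw [Real.dist_eq]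
    have he : |y - (y - Real.exp (y - n))| = Real.exp (y - n) := by
      rw [show y - (y - Real.exp (y - n)) = Real.exp (y - n) by ring, abs_of_pos hpos]
    rw [he]
    linarith
  · intro p
    simp [deriv_id]
end

section
/- Let H be an invertible symmetric D×D real matrix, L < ‖H⁻¹‖⁻¹ a positive constant, R₀ > 0, and φ : B_{R₀} → ℝ a function with φ(0) = 0, ∇φ(0) = 0, and ∇φ Lipschitz on B_{R₀} with constant L. For t ∈ [0,1] define y_t(x) = Hx + t∇φ(x), and set c = ‖H⁻¹‖⁻¹ − L, C = ‖H‖ + L, R = cR₀/C. Then y_t restricted to B_R is a homeomorphism onto its image and c|x − x'| ≤ |y_t(x) − y_t(x')| ≤ C|x − x'| for all x, x' ∈ B_R. -/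
open Metric RealInnerProductSpace Topology

/-- bi-Lipschitz estimates for `y_t(x) = Hx + t∇φ(x)` near a nondegenerate
point, and the fact that `y_t` restricted to `B_R` is a homeomorphism onto its image. -/
theorem stmt5 {D : ℕ}
    (H H' : EuclideanSpace ℝ (Fin D) →L[ℝ] EuclideanSpace ℝ (Fin D))
    (hsymm : ∀ x y, ⟪H x, y⟫ = ⟪x, H y⟫)
    (hinv : H.comp H' = ContinuousLinearMap.id ℝ _ ∧
            H'.comp H = ContinuousLinearMap.id ℝ _)
    (L R₀ : ℝ) (hL : 0 < L) (hLlt : L < ‖H'‖⁻¹) (hR₀ : 0 < R₀)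
    (φ : EuclideanSpace ℝ (Fin D) → ℝ)
    (hφ0 : φ 0 = 0) (hgrad0 : gradient φ 0 = 0)
    (hLip : LipschitzOnWith L.toNNReal (gradient φ) (closedBall 0 R₀))
    (t : ℝ) (ht : t ∈ Set.Icc (0:ℝ) 1)
    (y : EuclideanSpace ℝ (Fin D) → EuclideanSpace ℝ (Fin D))
    (hy : ∀ x, y x = H x + t • gradient φ x)
    (c C R : ℝ) (hc : c = ‖H'‖⁻¹ - L) (hC : C = ‖H‖ + L) (hR : R = c * R₀ / C) :
    (∀ x ∈ closedBall (0 : EuclideanSpace ℝ (Fin D)) R, ∀ x' ∈ closedBall (0 : EuclideanSpace ℝ (Fin D)) R,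
      c * ‖x - x'‖ ≤ ‖y x - y x'‖ ∧ ‖y x - y x'‖ ≤ C * ‖x - x'‖) ∧
    IsEmbedding ((closedBall (0 : EuclideanSpace ℝ (Fin D)) R).restrict y) := by
  obtain ⟨hHH', hH'H⟩ := hinv
  have hH'pos : 0 < ‖H'‖ := by
    rcases lt_or_eq_of_le (norm_nonneg H') with h | h
    · exact h
    · rw [← h] at hLlt; simp at hLlt; linarith
  have hcpos : 0 < c := by rw [hc]; linarith
  have hH'ne : H' ≠ 0 := norm_pos_iff.mp hH'pos
  have hnt : Nontrivial (EuclideanSpace ℝ (Fin D)) := by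
    by_contra h
    rw [not_nontrivial_iff_subsingleton] at h
    exact hH'ne (ContinuousLinearMap.ext fun z => Subsingleton.elim _ _)
  have hone : (1:ℝ) ≤ ‖H'‖ * ‖H‖ := by
    calc (1:ℝ) = ‖ContinuousLinearMap.id ℝ (EuclideanSpace ℝ (Fin D))‖ := by
          rw [ContinuousLinearMap.norm_id]
      _ = ‖H'.comp H‖ := by rw [hH'H]
      _ ≤ ‖H'‖ * ‖H‖ := ContinuousLinearMap.opNorm_comp_le _ _
  have hinvle : ‖H'‖⁻¹ ≤ ‖H‖ := by
    rw [inv_le_iff_one_le_mul₀ hH'pos]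
    linarith [hone]
  have hCpos : 0 < C := by rw [hC]; nlinarith [norm_nonneg H]
  have hcC : c ≤ C := by rw [hc, hC]; linarith
  have hRR₀ : R ≤ R₀ := by
    rw [hR, div_le_iff₀ hCpos]
    nlinarith
  -- lower bound for H
  have hHlow : ∀ z, ‖H'‖⁻¹ * ‖z‖ ≤ ‖H z‖ := by
    intro z
    have h1 : ‖z‖ = ‖H' (H z)‖ := by
      have := ContinuousLinearMap.ext_iff.mp hH'H z
      simp only [ContinuousLinearMap.coe_comp', Function.comp_apply,
        ContinuousLinearMap.coe_id', id_eq] at this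
      rw [this]
    have h2 : ‖H' (H z)‖ ≤ ‖H'‖ * ‖H z‖ := H'.le_opNorm _
    rw [inv_mul_le_iff₀ hH'pos]
    linarith [h1 ▸ h2]
  have key : ∀ x ∈ closedBall (0 : EuclideanSpace ℝ (Fin D)) R,
      ∀ x' ∈ closedBall (0 : EuclideanSpace ℝ (Fin D)) R,
      c * ‖x - x'‖ ≤ ‖y x - y x'‖ ∧ ‖y x - y x'‖ ≤ C * ‖x - x'‖ := by
    intro x hx x' hx'
    have hx0 : x ∈ closedBall (0 : EuclideanSpace ℝ (Fin D)) R₀ :=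
      closedBall_subset_closedBall hRR₀ hx
    have hx'0 : x' ∈ closedBall (0 : EuclideanSpace ℝ (Fin D)) R₀ :=
      closedBall_subset_closedBall hRR₀ hx'
    have hg : ‖gradient φ x - gradient φ x'‖ ≤ L * ‖x - x'‖ := by
      have := hLip.dist_le_mul x hx0 x' hx'0
      rw [dist_eq_norm, dist_eq_norm] at this
      rwa [Real.coe_toNNReal _ hL.le] at this
    have hyy : y x - y x' = H (x - x') + t • (gradient φ x - gradient φ x') := by
      rw [hy, hy, map_sub, smul_sub]; abel
    have hts : ‖t • (gradient φ x - gradient φ x')‖ ≤ L * ‖x - x'‖ := by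
      rw [norm_smul, Real.norm_eq_abs, abs_of_nonneg ht.1]
      nlinarith [ht.1, ht.2, norm_nonneg (gradient φ x - gradient φ x'), norm_nonneg (x - x')]
    constructor
    · have h1 : ‖H (x - x')‖ ≤ ‖y x - y x'‖ + ‖t • (gradient φ x - gradient φ x')‖ := by
        rw [hyy]
        calc ‖H (x - x')‖ = ‖(H (x - x') + t • (gradient φ x - gradient φ x'))
              - t • (gradient φ x - gradient φ x')‖ := by rw [add_sub_cancel_right]
          _ ≤ _ := norm_sub_le _ _
      have h2 := hHlow (x - x')
      rw [hc]; linarith [hts]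
    · rw [hyy, hC]
      calc ‖H (x - x') + t • (gradient φ x - gradient φ x')‖
          ≤ ‖H (x - x')‖ + ‖t • (gradient φ x - gradient φ x')‖ := norm_add_le _ _
        _ ≤ ‖H‖ * ‖x - x'‖ + L * ‖x - x'‖ := add_le_add (H.le_opNorm _) hts
        _ = (‖H‖ + L) * ‖x - x'‖ := by ring
  refine ⟨key, ?_⟩
  have hlip : LipschitzWith C.toNNReal ((closedBall (0 : EuclideanSpace ℝ (Fin D)) R).restrict y) := by
    apply LipschitzWith.of_dist_le_mul
    rintro ⟨x, hx⟩ ⟨x', hx'⟩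
    rw [Subtype.dist_eq, dist_eq_norm, dist_eq_norm, Real.coe_toNNReal _ hCpos.le]
    exact (key x hx x' hx').2
  have halip : AntilipschitzWith c⁻¹.toNNReal ((closedBall (0 : EuclideanSpace ℝ (Fin D)) R).restrict y) := by
    apply AntilipschitzWith.of_le_mul_dist
    rintro ⟨x, hx⟩ ⟨x', hx'⟩
    rw [Subtype.dist_eq, dist_eq_norm, dist_eq_norm, Real.coe_toNNReal _ (inv_nonneg.mpr hcpos.le)]
    rw [le_inv_mul_iff₀ hcpos]
    exact (key x hx x' hx').1
  exact (halip.isUniformEmbedding hlip.uniformContinuous).isEmbedding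
end

section
/- Let 0 < r₁ < r₂, p ∈ V, with V and S compact metric spaces and B_{r₂}(p) ⊂ V. Suppose f_n, f : V → S are homeomorphisms with f_n → f uniformly on V. Then for all sufficiently large n, f(B_{r₁}(p)) ⊆ f_n(B_{r₂}(p)). -/
open Filter Topology Metric

/-- if `fₙ, f : V → S` are homeomorphisms of compact metric spaces with
`fₙ → f` uniformly, and `B_{r₂}(p)` is a proper subset of `V`, then eventually
`f(B_{r₁}(p)) ⊆ fₙ(B_{r₂}(p))` for `0 < r₁ < r₂`. -/
theorem stmt8 {V S : Type*} [MetricSpace V] [MetricSpace S]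
    [CompactSpace V] [CompactSpace S]
    (r₁ r₂ : ℝ) (hr₁ : 0 < r₁) (hr₁₂ : r₁ < r₂) (p : V)
    (hproper : closedBall p r₂ ≠ Set.univ)
    (fn : ℕ → V ≃ₜ S) (f : V ≃ₜ S)
    (hconv : TendstoUniformly (fun n x => fn n x) (fun x => f x) atTop) :
    ∀ᶠ n in atTop, f '' closedBall p r₁ ⊆ fn n '' closedBall p r₂ := by
  have hε : (0:ℝ) < r₂ - r₁ := by linarith
  -- uniform continuity of f.symm
  have huc : UniformContinuous (f.symm : S → V) :=
    CompactSpace.uniformContinuous_of_continuous f.symm.continuous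
  obtain ⟨δ, hδ, hδ'⟩ := Metric.uniformContinuous_iff.mp huc (r₂ - r₁) hε
  have hev : ∀ᶠ n in atTop, ∀ x, dist (f x) (fn n x) < δ :=
    Metric.tendstoUniformly_iff.mp hconv δ hδ
  filter_upwards [hev] with n hn
  rintro s ⟨x, hx, rfl⟩
  refine ⟨(fn n).symm (f x), ?_, by simp⟩
  have hz : dist (f ((fn n).symm (f x))) (f x) < δ := by
    have := hn ((fn n).symm (f x))
    simpa using this
  have hdx : dist ((fn n).symm (f x)) x < r₂ - r₁ := by
    have := hδ' hz
    simpa using this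
  have hx' : dist x p ≤ r₁ := mem_closedBall.mp hx
  have : dist ((fn n).symm (f x)) p ≤ r₂ := by
    calc dist ((fn n).symm (f x)) p ≤ dist ((fn n).symm (f x)) x + dist x p :=
          dist_triangle _ _ _
      _ ≤ r₂ := by linarith
  exact mem_closedBall.mpr this
end

section
/- Let f : ℝ^D → ℝ be C² near 0 with ∇f(0) = 0, f(0) = 0, and H := H_f(0) invertible. Define φ(x) = f(x) − ½x'Hx, and suppose ∇φ is Lipschitz on B_{R₀} with constant L ≤ ‖H⁻¹‖⁻¹. With c = ‖H⁻¹‖⁻¹ − L, for y_t(x) = Hx + t∇φ(x), define v_t(x) = −φ(x) y_t(x)/|y_t(x)|² for x ≠ 0 and v_t(0) = 0, restricted to B_R with R = cR₀/(‖H‖+L). Then v_t is Lipschitz on B_R with constant a₁ = (L/c)(2 + 3(‖H‖+L)/c). -/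
/-!
Write `v = -φ • ι ∘ y`, where `ι u = ‖u‖⁻² • u` is the inversion in the unit sphere, so that
`‖ι a - ι b‖ = ‖a - b‖ / (‖a‖ ‖b‖)`. For `‖q‖ ≤ ‖p‖` split
`v p - v q = (φ q - φ p) • ι (y p) + φ q • (ι (y q) - ι (y p))`.
Since `∇φ` vanishes at `0` and is `L`-Lipschitz, the mean value inequality gives
`|φ q - φ p| ≤ L ‖p‖ ‖p - q‖` and `|φ q| ≤ L ‖q‖²`, while `y = H + t ∇φ` is squeezed between
`c ‖x - x'‖` and `(‖H‖ + L) ‖x - x'‖`. The first term is then at most `(L / c) ‖p - q‖`, the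
second at most `(L (‖H‖ + L) / c²) ‖p - q‖`, and their sum is below `a₁`.
If `c ≤ 0` the ball `B_R` has at most one point.
-/

open Metric RealInnerProductSpace

theorem LipschitzOnWith.const_smul_of_norm_le_one {α β : Type*} [PseudoEMetricSpace α]
    [SeminormedAddCommGroup β] [NormedSpace ℝ β] {g : α → β} {L : NNReal} {s : Set α}
    (hg : LipschitzOnWith L g s) {t : ℝ} (ht : ‖t‖ ≤ 1) : LipschitzOnWith L (fun x => t • g x) s :=
  ((lipschitzWith_smul t).comp_lipschitzOnWith hg).weaken
    (mul_le_of_le_one_left' (by exact_mod_cast ht))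

section Normed

variable {E F : Type*} [NormedAddCommGroup E] [NormedSpace ℝ E]
  [NormedAddCommGroup F] [NormedSpace ℝ F]

theorem ContinuousLinearMap.norm_le_opNorm_mul_of_comp_eq_id {H : E →L[ℝ] F} {H' : F →L[ℝ] E}
    (h : H'.comp H = .id ℝ E) (z : E) : ‖z‖ ≤ ‖H'‖ * ‖H z‖ :=
  calc ‖z‖ = ‖H'.comp H z‖ := by rw [h, ContinuousLinearMap.id_apply]
    _ ≤ ‖H'‖ * ‖H z‖ := H'.le_opNorm _

theorem ContinuousLinearMap.inv_opNorm_le_opNorm_of_comp_eq_id {H : E →L[ℝ] F}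
    {H' : F →L[ℝ] E} (h : H'.comp H = .id ℝ E) : ‖H'‖⁻¹ ≤ ‖H‖ := by
  rcases subsingleton_or_nontrivial E with hE | hE
  · simp [Subsingleton.elim H' 0]
  · have h1 : 1 ≤ ‖H'‖ * ‖H‖ := by
      simpa [h] using H'.opNorm_comp_le H
    exact (inv_le_iff_one_le_mul₀'
      (pos_of_mul_pos_left (one_pos.trans_le h1) (norm_nonneg _))).2 h1

theorem ContinuousLinearMap.mul_norm_le_norm_apply_of_comp_eq_id {H : E →L[ℝ] F}
    {H' : F →L[ℝ] E} (h : H'.comp H = .id ℝ E) (z : E) : ‖H'‖⁻¹ * ‖z‖ ≤ ‖H z‖ := by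
  rcases (norm_nonneg H').eq_or_lt with h0 | h0
  · simp [← h0]
  · rw [inv_mul_le_iff₀ h0]
    exact norm_le_opNorm_mul_of_comp_eq_id h z

variable {s : Set E} {x x' : E}

theorem norm_add_sub_add_le_of_lipschitzOnWith (H : E →L[ℝ] F) {g : E → F} {L : NNReal}
    (hg : LipschitzOnWith L g s) (hx : x ∈ s) (hx' : x' ∈ s) :
    ‖(H x + g x) - (H x' + g x')‖ ≤ (‖H‖ + L) * ‖x - x'‖ := by
  have hH := H.le_opNorm (x - x')
  have hg' := hg.norm_sub_le hx hx'
  rw [add_sub_add_comm, ← map_sub]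
  linarith [norm_add_le (H (x - x')) (g x - g x')]

theorem sub_mul_norm_le_norm_add_sub_add_of_lipschitzOnWith {H : E →L[ℝ] F} {m : ℝ}
    (hH : ∀ z, m * ‖z‖ ≤ ‖H z‖) {g : E → F} {L : NNReal} (hg : LipschitzOnWith L g s)
    (hx : x ∈ s) (hx' : x' ∈ s) :
    (m - L) * ‖x - x'‖ ≤ ‖(H x + g x) - (H x' + g x')‖ := by
  have hHx := hH (x - x')
  have hg' := hg.norm_sub_le hx hx'
  have : H (x - x') = (H x + g x) - (H x' + g x') - (g x - g x') := by rw [map_sub]; abel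
  rw [this] at hHx
  linarith [norm_sub_le ((H x + g x) - (H x' + g x')) (g x - g x')]

theorem abs_sub_le_of_norm_fderiv_le {φ : E → ℝ} (hφ : Differentiable ℝ φ) {L r : ℝ} (hL : 0 ≤ L)
    (hbound : ∀ z ∈ closedBall (0 : E) r, ‖fderiv ℝ φ z‖ ≤ L * ‖z‖)
    (hx : x ∈ closedBall 0 r) (hx' : x' ∈ closedBall 0 r) :
    |φ x - φ x'| ≤ L * max ‖x‖ ‖x'‖ * ‖x - x'‖ := by
  set m := max ‖x‖ ‖x'‖
  have hmr : closedBall (0 : E) m ⊆ closedBall 0 r :=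
    closedBall_subset_closedBall
      (max_le (mem_closedBall_zero_iff.1 hx) (mem_closedBall_zero_iff.1 hx'))
  have hbound' : ∀ z ∈ closedBall (0 : E) m, ‖fderiv ℝ φ z‖ ≤ L * m := fun z hz =>
    (hbound z (hmr hz)).trans (mul_le_mul_of_nonneg_left (mem_closedBall_zero_iff.1 hz) hL)
  simpa [← Real.norm_eq_abs] using
    (convex_closedBall (0 : E) m).norm_image_sub_le_of_norm_fderiv_le (fun z _ => hφ z) hbound'
      (mem_closedBall_zero_iff.2 (le_max_right _ _)) (mem_closedBall_zero_iff.2 (le_max_left _ _))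

end Normed

section Gradient

variable {E : Type*} [NormedAddCommGroup E] [InnerProductSpace ℝ E]

theorem hasFDerivAt_inner_apply_self_zero (H : E →L[ℝ] E) :
    HasFDerivAt (fun x => ⟪H x, x⟫) (0 : E →L[ℝ] ℝ) 0 :=
  ((H.hasFDerivAt (x := 0)).inner ℝ (hasFDerivAt_id 0)).congr_fderiv <| by
    ext z; simp [fderivInnerCLM_apply]

variable [CompleteSpace E]

theorem gradient_sub_half_inner_self_zero {f : E → ℝ} (hf : DifferentiableAt ℝ f 0)
    (hgrad0 : gradient f 0 = 0) (H : E →L[ℝ] E) :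
    gradient (fun x => f x - (1 / 2 : ℝ) * ⟪H x, x⟫) 0 = 0 := by
  have hf' : HasFDerivAt f (0 : E →L[ℝ] ℝ) 0 := by
    simpa [← toDual_gradient, hgrad0] using hf.hasFDerivAt
  have h : HasFDerivAt (fun x => f x - (1 / 2 : ℝ) * ⟪H x, x⟫) (0 : E →L[ℝ] ℝ) 0 :=
    (hf'.sub ((hasFDerivAt_inner_apply_self_zero H).const_mul (1 / 2 : ℝ))).congr_fderiv (by simp)
  rw [gradient, h.fderiv, map_zero]

theorem norm_fderiv_le_of_lipschitzOnWith_gradient {φ : E → ℝ} {L : NNReal} {s : Set E}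
    (hLip : LipschitzOnWith L (gradient φ) s) (h0 : 0 ∈ s) (hgrad0 : gradient φ 0 = 0)
    {z : E} (hz : z ∈ s) : ‖fderiv ℝ φ z‖ ≤ L * ‖z‖ := by
  rw [← toDual_gradient, LinearIsometryEquiv.norm_map]
  simpa [hgrad0] using hLip.norm_sub_le hz h0

theorem abs_sub_le_of_lipschitzOnWith_gradient {φ : E → ℝ} (hφ : Differentiable ℝ φ) {L : NNReal}
    {r : ℝ} (hLip : LipschitzOnWith L (gradient φ) (closedBall 0 r)) (hgrad0 : gradient φ 0 = 0)
    {x x' : E} (hx : x ∈ closedBall 0 r) (hx' : x' ∈ closedBall 0 r) :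
    |φ x - φ x'| ≤ L * max ‖x‖ ‖x'‖ * ‖x - x'‖ :=
  abs_sub_le_of_norm_fderiv_le hφ L.2 (fun _ hz =>
    norm_fderiv_le_of_lipschitzOnWith_gradient hLip (mem_closedBall_self (nonempty_closedBall.1 ⟨x, hx⟩)) hgrad0 hz)
    hx hx'

end Gradient

section Field

variable {E F : Type*} [NormedAddCommGroup E] [NormedAddCommGroup F] [InnerProductSpace ℝ F]
  {s : Set E} {φ : E → ℝ} {y : E → F} {L c K : ℝ}

theorem norm_smul_div_norm_sq_sub_le (hc : 0 < c) (hL : 0 ≤ L) (hK : 0 ≤ K) (hφ0 : φ 0 = 0)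
    (hy0 : y 0 = 0) (h0 : 0 ∈ s)
    (hφ : ∀ x ∈ s, ∀ x' ∈ s, |φ x - φ x'| ≤ L * max ‖x‖ ‖x'‖ * ‖x - x'‖)
    (hylow : ∀ x ∈ s, ∀ x' ∈ s, c * ‖x - x'‖ ≤ ‖y x - y x'‖)
    (hyup : ∀ x ∈ s, ∀ x' ∈ s, ‖y x - y x'‖ ≤ K * ‖x - x'‖)
    {p q : E} (hp : p ∈ s) (hq : q ∈ s) (hqp : ‖q‖ ≤ ‖p‖) :
    ‖(-φ p / ‖y p‖ ^ 2) • y p - (-φ q / ‖y q‖ ^ 2) • y q‖ ≤ (L / c + L * K / c ^ 2) * ‖p - q‖ := by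
  have hylow₀ : ∀ x ∈ s, c * ‖x‖ ≤ ‖y x‖ := fun x hx => by simpa [hy0] using hylow x hx 0 h0
  set ι : E → F := fun x => (1 / ‖y x‖) ^ 2 • y x
  have hv : ∀ x, (-φ x / ‖y x‖ ^ 2) • y x = -φ x • ι x := fun x => by
    simp only [ι, smul_smul]; ring_nf
  have hι_norm : ‖ι p‖ = ‖y p‖⁻¹ := by
    rcases eq_or_ne ‖y p‖ 0 with h | h
    · simp [ι, h]
    · simp only [ι, norm_smul, norm_pow, norm_div, norm_one, norm_norm]
      field_simp
  have hdecomp : -φ p • ι p - -φ q • ι q = (φ q - φ p) • ι p + -φ q • (ι p - ι q) := by module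
  have h1 : ‖(φ q - φ p) • ι p‖ ≤ L / c * ‖p - q‖ := by
    have hφpq : |φ q - φ p| ≤ L * ‖p‖ * ‖p - q‖ := by
      simpa [max_eq_right hqp, norm_sub_rev q p] using hφ q hq p hp
    have hp_div : ‖p‖ * ‖y p‖⁻¹ ≤ c⁻¹ := by
      rcases (norm_nonneg (y p)).eq_or_lt with h | h
      · simp [← h, hc.le]
      · rw [← div_eq_mul_inv, div_le_iff₀ h, inv_mul_eq_div, le_div_iff₀' hc]
        exact hylow₀ p hp
    calc ‖(φ q - φ p) • ι p‖ = |φ q - φ p| * ‖y p‖⁻¹ := by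
          rw [norm_smul, Real.norm_eq_abs, hι_norm]
      _ ≤ L * ‖p‖ * ‖p - q‖ * ‖y p‖⁻¹ := by gcongr
      _ = L * ‖p - q‖ * (‖p‖ * ‖y p‖⁻¹) := by ring
      _ ≤ L * ‖p - q‖ * c⁻¹ := by gcongr
      _ = L / c * ‖p - q‖ := by ring
  have h2 : ‖-φ q • (ι p - ι q)‖ ≤ L * K / c ^ 2 * ‖p - q‖ := by
    rcases eq_or_ne q 0 with rfl | hq0
    · simp [hφ0]; positivity
    have hqpos : 0 < ‖q‖ := norm_pos_iff.2 hq0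
    have hppos : 0 < ‖p‖ := hqpos.trans_le hqp
    have hyq : 0 < ‖y q‖ := (mul_pos hc hqpos).trans_le (hylow₀ q hq)
    have hyp : 0 < ‖y p‖ := (mul_pos hc hppos).trans_le (hylow₀ p hp)
    have hι : ‖ι p - ι q‖ = ‖y p - y q‖ / (‖y p‖ * ‖y q‖) := by
      have := dist_div_norm_sq_smul (norm_pos_iff.1 hyp) (norm_pos_iff.1 hyq) 1
      rw [dist_eq_norm, dist_eq_norm] at this
      rw [this]; ring
    have hφq : |φ q| ≤ L * ‖q‖ ^ 2 := by simpa [hφ0, sq, mul_assoc] using hφ q hq 0 h0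
    rw [norm_smul, Real.norm_eq_abs, abs_neg, hι, ← mul_div_assoc, div_le_iff₀ (by positivity)]
    calc |φ q| * ‖y p - y q‖ ≤ L * ‖q‖ ^ 2 * (K * ‖p - q‖) := by
          gcongr
          exact hyup p hp q hq
      _ ≤ L * (‖p‖ * ‖q‖) * (K * ‖p - q‖) := by gcongr; rw [sq]; gcongr
      _ = L * K / c ^ 2 * ‖p - q‖ * ((c * ‖p‖) * (c * ‖q‖)) := by field_simp
      _ ≤ L * K / c ^ 2 * ‖p - q‖ * (‖y p‖ * ‖y q‖) := by
          gcongr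
          · exact hylow₀ p hp
          · exact hylow₀ q hq
  rw [hv, hv, hdecomp]
  calc _ ≤ _ := norm_add_le _ _
    _ ≤ _ := add_le_add h1 h2
    _ = _ := by ring

theorem lipschitzOnWith_smul_div_norm_sq (hc : 0 < c) (hL : 0 ≤ L) (hK : 0 ≤ K) (hφ0 : φ 0 = 0)
    (hy0 : y 0 = 0) (h0 : 0 ∈ s)
    (hφ : ∀ x ∈ s, ∀ x' ∈ s, |φ x - φ x'| ≤ L * max ‖x‖ ‖x'‖ * ‖x - x'‖)
    (hylow : ∀ x ∈ s, ∀ x' ∈ s, c * ‖x - x'‖ ≤ ‖y x - y x'‖)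
    (hyup : ∀ x ∈ s, ∀ x' ∈ s, ‖y x - y x'‖ ≤ K * ‖x - x'‖) :
    LipschitzOnWith (L / c + L * K / c ^ 2).toNNReal (fun x => (-φ x / ‖y x‖ ^ 2) • y x) s := by
  refine LipschitzOnWith.of_dist_le_mul fun p hp q hq => ?_
  rw [Real.coe_toNNReal _ (by positivity), dist_eq_norm, dist_eq_norm]
  rcases le_total ‖q‖ ‖p‖ with hqp | hpq
  · exact norm_smul_div_norm_sq_sub_le hc hL hK hφ0 hy0 h0 hφ hylow hyup hp hq hqp
  · rw [norm_sub_rev, norm_sub_rev p]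
    exact norm_smul_div_norm_sq_sub_le hc hL hK hφ0 hy0 h0 hφ hylow hyup hq hp hpq

end Field

theorem stmt11_general {D : ℕ}
    (f : EuclideanSpace ℝ (Fin D) → ℝ) (hf : ContDiff ℝ 2 f)
    (hf0 : f 0 = 0) (hgrad0 : gradient f 0 = 0)
    (H H' : EuclideanSpace ℝ (Fin D) →L[ℝ] EuclideanSpace ℝ (Fin D))
    (hinv : H.comp H' = ContinuousLinearMap.id ℝ _ ∧
            H'.comp H = ContinuousLinearMap.id ℝ _)
    (φ : EuclideanSpace ℝ (Fin D) → ℝ)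
    (hφ : ∀ x, φ x = f x - (1/2 : ℝ) * ⟪H x, x⟫)
    (L R₀ : ℝ) (hL : 0 < L) (hR₀ : 0 < R₀)
    (hLip : LipschitzOnWith L.toNNReal (gradient φ) (closedBall 0 R₀))
    (c R a₁ : ℝ) (hc : c = ‖H'‖⁻¹ - L) (hR : R = c * R₀ / (‖H‖ + L))
    (ha₁ : a₁ = (L / c) * (2 + 3 * (‖H‖ + L) / c))
    (t : ℝ) (ht : t ∈ Set.Icc (0:ℝ) 1)
    (y v : EuclideanSpace ℝ (Fin D) → EuclideanSpace ℝ (Fin D))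
    (hy : ∀ x, y x = H x + t • gradient φ x)
    (hv : ∀ x, v x = if x = (0 : EuclideanSpace ℝ (Fin D)) then 0 else (-(φ x) / ‖y x‖ ^ 2) • y x) :
    LipschitzOnWith a₁.toNNReal v (closedBall 0 R) := by
  rcases le_or_gt c 0 with hc0 | hc0
  · have hR0 : R ≤ 0 := hR ▸ div_nonpos_of_nonpos_of_nonneg
      (mul_nonpos_of_nonpos_of_nonneg hc0 hR₀.le) (by positivity)
    exact fun p hp q hq => by simp [subsingleton_closedBall 0 hR0 hp hq]
  set B := closedBall (0 : EuclideanSpace ℝ (Fin D)) R₀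
  have h0B : 0 ∈ B := mem_closedBall_self hR₀.le
  have hRR₀ : R ≤ R₀ := by
    have := H.inv_opNorm_le_opNorm_of_comp_eq_id hinv.2
    rw [hR, div_le_iff₀ (by positivity)]
    nlinarith
  have hφdiff : Differentiable ℝ φ :=
    funext hφ ▸ (hf.differentiable (by norm_num)).sub
      ((differentiable_const _).mul (H.differentiable.inner ℝ differentiable_id))
  have hφ0 : φ 0 = 0 := by simp [hφ, hf0]
  have hgradφ0 : gradient φ 0 = 0 := funext hφ ▸
    gradient_sub_half_inner_self_zero (hf.differentiable (by norm_num) 0) hgrad0 H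
  have hφB : ∀ x ∈ B, ∀ x' ∈ B, |φ x - φ x'| ≤ L * max ‖x‖ ‖x'‖ * ‖x - x'‖ := fun x hx x' hx' => by
    simpa [hL.le] using abs_sub_le_of_lipschitzOnWith_gradient hφdiff hLip hgradφ0 hx hx'
  have htLip := hLip.const_smul_of_norm_le_one (t := t) ((Real.norm_of_nonneg ht.1).trans_le ht.2)
  have hylow : ∀ x ∈ B, ∀ x' ∈ B, c * ‖x - x'‖ ≤ ‖y x - y x'‖ := fun x hx x' hx' => by
    simpa [hy, hc, hL.le] using sub_mul_norm_le_norm_add_sub_add_of_lipschitzOnWith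
      (H.mul_norm_le_norm_apply_of_comp_eq_id hinv.2) htLip hx hx'
  have hyup : ∀ x ∈ B, ∀ x' ∈ B, ‖y x - y x'‖ ≤ (‖H‖ + L) * ‖x - x'‖ := fun x hx x' hx' => by
    simpa [hy, hL.le] using norm_add_sub_add_le_of_lipschitzOnWith H htLip hx hx'
  have hy0 : y 0 = 0 := by simp [hy, hgradφ0]
  have hv' : v = fun x => (-φ x / ‖y x‖ ^ 2) • y x := by
    ext1 x; rw [hv]; split_ifs with h <;> simp [h, hy0]
  rw [hv']
  refine ((lipschitzOnWith_smul_div_norm_sq hc0 hL.le (by positivity) hφ0 hy0 h0B hφB hylow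
    hyup).mono (closedBall_subset_closedBall hRR₀)).weaken (Real.toNNReal_le_toNNReal ?_)
  rw [ha₁, show L / c * (2 + 3 * (‖H‖ + L) / c) = (L / c + L * (‖H‖ + L) / c ^ 2)
    + (L / c + 2 * (L * (‖H‖ + L) / c ^ 2)) by field_simp; ring]
  exact le_add_of_nonneg_right (by positivity)

/-- the vector field `v_t` of the homotopic proof of the Morse Lemma is
Lipschitz on `B_R` with constant `a₁ = (L/c)(2 + 3(‖H‖+L)/c)`. -/
theorem stmt11 {D : ℕ}
    (f : EuclideanSpace ℝ (Fin D) → ℝ) (hf : ContDiff ℝ 2 f)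
    (hf0 : f 0 = 0) (hgrad0 : gradient f 0 = 0)
    (H H' : EuclideanSpace ℝ (Fin D) →L[ℝ] EuclideanSpace ℝ (Fin D))
    (hH : HasFDerivAt (gradient f) H 0)
    (hinv : H.comp H' = ContinuousLinearMap.id ℝ _ ∧
            H'.comp H = ContinuousLinearMap.id ℝ _)
    (φ : EuclideanSpace ℝ (Fin D) → ℝ)
    (hφ : ∀ x, φ x = f x - (1/2 : ℝ) * ⟪H x, x⟫)
    (L R₀ : ℝ) (hL : 0 < L) (hLle : L ≤ ‖H'‖⁻¹) (hR₀ : 0 < R₀)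
    (hLip : LipschitzOnWith L.toNNReal (gradient φ) (closedBall 0 R₀))
    (c R a₁ : ℝ) (hc : c = ‖H'‖⁻¹ - L) (hR : R = c * R₀ / (‖H‖ + L))
    (ha₁ : a₁ = (L / c) * (2 + 3 * (‖H‖ + L) / c))
    (t : ℝ) (ht : t ∈ Set.Icc (0:ℝ) 1)
    (y v : EuclideanSpace ℝ (Fin D) → EuclideanSpace ℝ (Fin D))
    (hy : ∀ x, y x = H x + t • gradient φ x)
    (hv : ∀ x, v x = if x = (0 : EuclideanSpace ℝ (Fin D)) then 0 else (-(φ x) / ‖y x‖ ^ 2) • y x) :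
    LipschitzOnWith a₁.toNNReal v (closedBall 0 R) :=
  stmt11_general f hf hf0 hgrad0 H H' hinv φ hφ L R₀ hL hR₀ hLip c R a₁ hc hR ha₁ t ht y v hy hv
end
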